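/- arXiv:2512.11809 — 5 statements merged into one kernel-verified Lean document; each statement's English description precedes it below -/
import Mathlib

section
/- Let X be an Archimedean vector lattice equipped with a convergence θ (satisfying axioms (1)–(4)), and let (x_α)_{α∈A} be a net in X with x_α ≥ 0 for all α and x ≥ 0. Then (x_α) is uθ-convergent to x if and only if x_α ∧ a →θ x ∧ a for every a ∈ X₊. -/
open Filter

/-- A convergence structure `θ` on a vector lattice `X`, assigning to nets (maps from
nonempty directed preordered index types) limit points, and satisfying axioms (1)–(4):
(1) constant nets converge; (2) linearity, and `t • x →θ 0` as the scalar net `t → 0`;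
(3) domination: if `x_α →θ 0` and `|y_α| ≤ |x_α|` then `y_α →θ 0`;
(4) every subnet of a `θ`-convergent net `θ`-converges to the same limit. -/
structure VLConvergence (X : Type*) [Lattice X] [AddCommGroup X] [Module ℝ X] where
  conv : ∀ {ι : Type} [Preorder ι] [IsDirected ι (· ≤ ·)] [Nonempty ι], (ι → X) → X → Prop
  conv_const : ∀ {ι : Type} [Preorder ι] [IsDirected ι (· ≤ ·)] [Nonempty ι] (x : X),
    conv (fun _ : ι => x) x
  conv_add_smul : ∀ {ι : Type} [Preorder ι] [IsDirected ι (· ≤ ·)] [Nonempty ι]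
    (f g : ι → X) (x y : X) (l : ℝ),
    conv f x → conv g y → conv (fun α => f α + l • g α) (x + l • y)
  conv_smul_zero : ∀ {ι : Type} [Preorder ι] [IsDirected ι (· ≤ ·)] [Nonempty ι]
    (t : ι → ℝ) (x : X), Filter.Tendsto t Filter.atTop (nhds (0 : ℝ)) →
    conv (fun α => t α • x) (0 : X)
  conv_dominated : ∀ {ι : Type} [Preorder ι] [IsDirected ι (· ≤ ·)] [Nonempty ι]
    (f g : ι → X), conv f 0 → (∀ α, |g α| ≤ |f α|) → conv g 0
  conv_subnet : ∀ {ι κ : Type} [Preorder ι] [IsDirected ι (· ≤ ·)] [Nonempty ι]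
    [Preorder κ] [IsDirected κ (· ≤ ·)] [Nonempty κ]
    (f : ι → X) (x : X) (φ : κ → ι), conv f x →
    (∀ α₀ : ι, ∃ β₀ : κ, ∀ β, β₀ ≤ β → α₀ ≤ φ β) → conv (fun β => f (φ β)) x

/-- The Archimedean property for a vector lattice. -/
def IsArchimedeanVL (X : Type*) [Lattice X] [AddCommGroup X] : Prop :=
  ∀ x y : X, 0 ≤ x → (∀ n : ℕ, n • x ≤ y) → x = 0

variable {X : Type*} [Lattice X] [AddCommGroup X]
  [CovariantClass X X (· + ·) (· ≤ ·)] [Module ℝ X] [PosSMulMono ℝ X]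

/-- The unbounded modification `uθ` of a convergence `θ`:
`x_α →uθ x` iff `(x_α ⊔ b) ⊓ c →θ (x ⊔ b) ⊓ c` for all `b ≤ c`. -/
def VLConvergence.uconv (θ : VLConvergence X)
    {ι : Type} [Preorder ι] [IsDirected ι (· ≤ ·)] [Nonempty ι]
    (f : ι → X) (x : X) : Prop :=
  ∀ b c : X, b ≤ c → θ.conv (fun α => (f α ⊔ b) ⊓ c) ((x ⊔ b) ⊓ c)

/-!
Truncation `t ↦ (t ⊔ b) ⊓ c` is `1`-Lipschitz for `|·|`, so by domination it carries
`θ`-convergent nets to `θ`-convergent nets. Since `(u ⊔ b) ⊓ c` only depends on `u ⊓ a` for any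
`a ≥ c`, convergence of `f α ⊓ c⁺` already yields convergence of every truncation `(f α ⊔ b) ⊓ c`.
-/

theorem inf_sup_inf_of_le {α : Type*} [DistribLattice α] {a c : α} (h : c ≤ a) (u b : α) :
    (u ⊓ a ⊔ b) ⊓ c = (u ⊔ b) ⊓ c := by
  rw [inf_sup_right, inf_sup_right, inf_assoc, inf_eq_right.mpr h]

namespace VLConvergence

variable {V : Type*} [Lattice V] [AddCommGroup V] [Module ℝ V] (θ : VLConvergence V)
  {ι : Type} [Preorder ι] [IsDirected ι (· ≤ ·)] [Nonempty ι]

theorem conv_sub_of_conv {f : ι → V} {x : V} (h : θ.conv f x) :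
    θ.conv (fun α => f α - x) 0 := by
  simpa only [neg_one_smul, ← sub_eq_add_neg, sub_self] using
    θ.conv_add_smul _ _ _ _ (-1) h (θ.conv_const x)

theorem conv_of_conv_sub {f : ι → V} {x : V} (h : θ.conv (fun α => f α - x) 0) :
    θ.conv f x := by
  simpa only [one_smul, sub_add_cancel, zero_add] using
    θ.conv_add_smul _ _ _ _ 1 h (θ.conv_const x)

theorem conv_of_abs_sub_le {f g : ι → V} {x y : V} (hf : θ.conv f x)
    (hle : ∀ α, |g α - y| ≤ |f α - x|) : θ.conv g y :=
  θ.conv_of_conv_sub <| θ.conv_dominated _ _ (θ.conv_sub_of_conv hf) hle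

theorem conv_sup_inf [AddLeftMono V] {f : ι → V} {x : V} (b c : V) (hf : θ.conv f x) :
    θ.conv (fun α => (f α ⊔ b) ⊓ c) ((x ⊔ b) ⊓ c) :=
  θ.conv_of_abs_sub_le hf fun _ =>
    (abs_inf_sub_inf_le_abs _ _ _).trans (abs_sup_sub_sup_le_abs _ _ _)

end VLConvergence

theorem stmt2_general (θ : VLConvergence X)
    {ι : Type} [Preorder ι] [IsDirected ι (· ≤ ·)] [Nonempty ι]
    (f : ι → X) (x : X) (hf : ∀ α, 0 ≤ f α) (hx : 0 ≤ x) :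
    θ.uconv f x ↔ ∀ a : X, 0 ≤ a → θ.conv (fun α => f α ⊓ a) (x ⊓ a) := by
  constructor
  · intro h a ha
    simpa only [sup_of_le_left (hf _), sup_of_le_left hx] using h 0 a ha
  · intro h b c _
    let := AddCommGroup.toDistribLattice X
    have hc : c ≤ c ⊔ 0 := le_sup_left
    simpa only [inf_sup_inf_of_le hc] using θ.conv_sup_inf b c (h (c ⊔ 0) le_sup_right)

theorem stmt2 (hArch : IsArchimedeanVL X) (θ : VLConvergence X)
    {ι : Type} [Preorder ι] [IsDirected ι (· ≤ ·)] [Nonempty ι]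
    (f : ι → X) (x : X) (hf : ∀ α, 0 ≤ f α) (hx : 0 ≤ x) :
    θ.uconv f x ↔ ∀ a : X, 0 ≤ a → θ.conv (fun α => f α ⊓ a) (x ⊓ a) :=
  stmt2_general θ f x hf hx
end

section
/- Let X be an Archimedean vector lattice equipped with a convergence θ (satisfying axioms (1)–(4)), and let (x_α)_{α∈A} and (y_α)_{α∈A} be nets in X indexed by the same directed set. If x_α →uθ x and y_α →uθ y, then x_α ∨ y_α →uθ x ∨ y and x_α ∧ y_α →uθ x ∧ y. -/
/-!
Birkhoff's inequality `|a ⊔ b - c ⊔ d| ≤ |a - c| + |b - d|` together with the domination axiom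
shows that `θ`-convergence is preserved by `⊔` and `⊓`. Since a lattice-ordered group is a
distributive lattice, each truncation `t ↦ (t ⊔ u) ⊓ v` is a lattice homomorphism, so the
truncations of `x_α ⊔ y_α` are the suprema of the truncations of `x_α` and `y_α`, which
`θ`-converge; likewise for `⊓`.
-/

open Filter

variable {X : Type*} [Lattice X] [AddCommGroup X]
  [CovariantClass X X (· + ·) (· ≤ ·)] [Module ℝ X] [PosSMulMono ℝ X]

section LatticeOrderedGroup

variable {E : Type*} [Lattice E] [AddCommGroup E] [AddLeftMono E]

theorem abs_sup_sub_sup_le_add_abs (a b c d : E) : |a ⊔ b - c ⊔ d| ≤ |a - c| + |b - d| :=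
  calc |a ⊔ b - c ⊔ d| = |(a ⊔ b - c ⊔ b) + (c ⊔ b - c ⊔ d)| := by rw [sub_add_sub_cancel]
    _ ≤ |a ⊔ b - c ⊔ b| + |c ⊔ b - c ⊔ d| := abs_add_le _ _
    _ ≤ |a - c| + |b - d| := by
      refine add_le_add (abs_sup_sub_sup_le_abs _ _ _) ?_
      rw [sup_comm c b, sup_comm c d]
      exact abs_sup_sub_sup_le_abs _ _ _

theorem abs_inf_sub_inf_le_add_abs (a b c d : E) : |a ⊓ b - c ⊓ d| ≤ |a - c| + |b - d| :=
  calc |a ⊓ b - c ⊓ d| = |(a ⊓ b - c ⊓ b) + (c ⊓ b - c ⊓ d)| := by rw [sub_add_sub_cancel]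
    _ ≤ |a ⊓ b - c ⊓ b| + |c ⊓ b - c ⊓ d| := abs_add_le _ _
    _ ≤ |a - c| + |b - d| := by
      refine add_le_add (abs_inf_sub_inf_le_abs _ _ _) ?_
      rw [inf_comm c b, inf_comm c d]
      exact abs_inf_sub_inf_le_abs _ _ _

end LatticeOrderedGroup

section DistribLattice

variable {α : Type*} [DistribLattice α]

theorem sup_sup_inf_eq (p q u v : α) : (p ⊔ q ⊔ u) ⊓ v = (p ⊔ u) ⊓ v ⊔ (q ⊔ u) ⊓ v := by
  rw [← inf_sup_right, ← sup_sup_distrib_right]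

theorem inf_sup_inf_eq (p q u v : α) : (p ⊓ q ⊔ u) ⊓ v = (p ⊔ u) ⊓ v ⊓ ((q ⊔ u) ⊓ v) := by
  rw [sup_inf_right, ← inf_inf_distrib_right]

end DistribLattice

namespace VLConvergence

section Conv

variable {E : Type*} [Lattice E] [AddCommGroup E] [Module ℝ E] (θ : VLConvergence E)
  {ι : Type} [Preorder ι] [IsDirected ι (· ≤ ·)] [Nonempty ι]

theorem conv_add {f g : ι → E} {x y : E} (hf : θ.conv f x) (hg : θ.conv g y) :
    θ.conv (fun α => f α + g α) (x + y) := by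
  simpa using θ.conv_add_smul f g x y 1 hf hg

theorem conv_sub_self {f : ι → E} {x : E} (h : θ.conv f x) : θ.conv (fun α => f α - x) 0 := by
  simpa [sub_eq_add_neg] using θ.conv_add_smul f (fun _ => x) x x (-1) h (θ.conv_const x)

theorem conv_of_conv_sub_self {f : ι → E} {x : E} (h : θ.conv (fun α => f α - x) 0) :
    θ.conv f x := by
  simpa using θ.conv_add h (θ.conv_const x)

variable [AddLeftMono E]

theorem conv_of_abs_sub_le_add {f g h : ι → E} {x y z : E} (hf : θ.conv f x) (hg : θ.conv g y)
    (hle : ∀ α, |h α - z| ≤ |f α - x| + |g α - y|) : θ.conv h z := by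
  have habs : ∀ {k : ι → E} {w : E}, θ.conv k w → θ.conv (fun α => |k α - w|) 0 :=
    fun hk => θ.conv_dominated _ _ (θ.conv_sub_self hk) fun _ => (abs_abs _).le
  have hsum : θ.conv (fun α => |f α - x| + |g α - y|) 0 := by
    simpa using θ.conv_add (habs hf) (habs hg)
  exact θ.conv_of_conv_sub_self
    (θ.conv_dominated _ _ hsum fun α => (hle α).trans (le_abs_self _))

theorem conv_sup {f g : ι → E} {x y : E} (hf : θ.conv f x) (hg : θ.conv g y) :
    θ.conv (fun α => f α ⊔ g α) (x ⊔ y) :=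
  θ.conv_of_abs_sub_le_add hf hg fun _ => abs_sup_sub_sup_le_add_abs _ _ _ _

theorem conv_inf {f g : ι → E} {x y : E} (hf : θ.conv f x) (hg : θ.conv g y) :
    θ.conv (fun α => f α ⊓ g α) (x ⊓ y) :=
  θ.conv_of_abs_sub_le_add hf hg fun _ => abs_inf_sub_inf_le_add_abs _ _ _ _

end Conv

section UConv

variable {E : Type*} [Lattice E] [AddCommGroup E] [AddLeftMono E] [Module ℝ E]
  {θ : VLConvergence E} {ι : Type} [Preorder ι] [IsDirected ι (· ≤ ·)] [Nonempty ι]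

theorem uconv_sup {f g : ι → E} {x y : E} (hf : θ.uconv f x) (hg : θ.uconv g y) :
    θ.uconv (fun α => f α ⊔ g α) (x ⊔ y) := by
  let := AddCommGroup.toDistribLattice E
  intro u v huv
  simpa only [sup_sup_inf_eq] using θ.conv_sup (hf u v huv) (hg u v huv)

theorem uconv_inf {f g : ι → E} {x y : E} (hf : θ.uconv f x) (hg : θ.uconv g y) :
    θ.uconv (fun α => f α ⊓ g α) (x ⊓ y) := by
  let := AddCommGroup.toDistribLattice E
  intro u v huv
  simpa only [inf_sup_inf_eq] using θ.conv_inf (hf u v huv) (hg u v huv)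

end UConv

end VLConvergence

theorem stmt3_general (θ : VLConvergence X)
    {ι : Type} [Preorder ι] [IsDirected ι (· ≤ ·)] [Nonempty ι]
    (x y : ι → X) (a b : X)
    (hx : θ.uconv x a) (hy : θ.uconv y b) :
    θ.uconv (fun α => x α ⊔ y α) (a ⊔ b) ∧ θ.uconv (fun α => x α ⊓ y α) (a ⊓ b) :=
  ⟨θ.uconv_sup hx hy, θ.uconv_inf hx hy⟩

theorem stmt3 (hArch : IsArchimedeanVL X) (θ : VLConvergence X)
    {ι : Type} [Preorder ι] [IsDirected ι (· ≤ ·)] [Nonempty ι]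
    (x y : ι → X) (a b : X)
    (hx : θ.uconv x a) (hy : θ.uconv y b) :
    θ.uconv (fun α => x α ⊔ y α) (a ⊔ b) ∧ θ.uconv (fun α => x α ⊓ y α) (a ⊓ b) :=
  stmt3_general θ x y a b hx hy
end

section
/- Let X be an Archimedean vector lattice equipped with a convergence θ (satisfying axioms (1)–(4)) which also satisfies property (*), and let e ∈ X₊. Then the following are equivalent: (i) e is a θ-unit; (ii) for every net (x_α)_{α∈A} in X, x_α →uθ 0 if and only if |x_α| ∧ e →θ 0; (iii) for every sequence (x_n)_{n∈ℕ} in X, x_n →uθ 0 if and only if |x_n| ∧ e →θ 0. -/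
open Filter

variable {X : Type*} [Lattice X] [AddCommGroup X]
  [CovariantClass X X (· + ·) (· ≤ ·)] [Module ℝ X] [PosSMulMono ℝ X]

/-- Property (*): whenever `0 ≤ x_α ≤ u_β + a (β, α)`, where `u_β →θ 0` and, for each
fixed `β`, the net `(a (β, α))_α` `θ`-converges to `0`, then `x_α →θ 0`. -/
def VLConvergence.StarProperty (θ : VLConvergence X) : Prop :=
  ∀ {ι κ : Type} [Preorder ι] [IsDirected ι (· ≤ ·)] [Nonempty ι]
    [Preorder κ] [IsDirected κ (· ≤ ·)] [Nonempty κ]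
    (x : ι → X) (u : κ → X) (a : κ → ι → X),
    (∀ α, 0 ≤ x α) → (∀ β α, x α ≤ u β + a β α) →
    θ.conv u 0 → (∀ β, θ.conv (a β) 0) → θ.conv x 0

/-- `e` is a `θ`-unit if `x ⊓ n • e →θ x` (as `n → ∞`) for every `x ∈ X₊`. -/
def VLConvergence.IsThetaUnit (θ : VLConvergence X) (e : X) : Prop :=
  ∀ x : X, 0 ≤ x → θ.conv (fun n : ℕ => x ⊓ n • e) x

/-!
For `0 ≤ u`, the θ-unit property makes the tail `u - u ⊓ n • e` θ-small, and
`|x| ⊓ u ≤ (u - u ⊓ n • e) + n • (|x| ⊓ e)`; property (*) then upgrades `|x_α| ⊓ e →θ 0` to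
`|x_α| ⊓ u →θ 0` for every `u ≥ 0`, which is exactly `x_α →uθ 0`. Conversely, for `x ≥ 0` the
sequence `y_n = x - x ⊓ n • e` satisfies `y_n ⊓ e ≤ x / (n + 1)`, so sequential (iii) gives
`y_n →uθ 0`; since `0 ≤ y_n ≤ x`, this means `y_n →θ 0`, i.e. `x ⊓ n • e →θ x`.
-/

section LatticeOrderedGroup

variable {G : Type*} [Lattice G] [AddCommGroup G] [AddLeftMono G]

theorem inf_add_le_inf_add_inf {a b c : G} (ha : 0 ≤ a) (hb : 0 ≤ b) (hc : 0 ≤ c) :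
    c ⊓ (a + b) ≤ c ⊓ a + c ⊓ b := by
  have h₁ : c ⊓ (a + b) ≤ c ⊓ a + c :=
    inf_le_left.trans (le_add_of_nonneg_left (le_inf hc ha))
  have h₂ : c ⊓ (a + b) ≤ c ⊓ a + b := by
    rw [inf_add c a b]
    exact le_inf (inf_le_left.trans (le_add_of_nonneg_right hb)) inf_le_right
  calc c ⊓ (a + b) ≤ (c ⊓ a + c) ⊓ (c ⊓ a + b) := le_inf h₁ h₂
    _ = c ⊓ a + c ⊓ b := (add_inf c b (c ⊓ a)).symm

theorem inf_nsmul_le_nsmul_inf {a e : G} (ha : 0 ≤ a) (he : 0 ≤ e) (n : ℕ) :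
    a ⊓ n • e ≤ n • (a ⊓ e) := by
  induction n with
  | zero => simp
  | succ n ih =>
    rw [succ_nsmul, succ_nsmul]
    calc a ⊓ (n • e + e) ≤ a ⊓ n • e + a ⊓ e := inf_add_le_inf_add_inf (nsmul_nonneg he n) he ha
      _ ≤ n • (a ⊓ e) + a ⊓ e := add_le_add_left ih _

theorem inf_le_sub_inf_add_inf (a u v : G) : a ⊓ u ≤ u - u ⊓ v + a ⊓ v := by
  rw [sub_add_eq_add_sub, le_sub_iff_add_le, add_inf a v u]
  exact le_inf (by rw [add_comm]; exact add_le_add inf_le_left inf_le_left)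
    (add_le_add inf_le_right inf_le_right)

theorem abs_inf_le_abs_sup_neg_inf (a b : G) : |a| ⊓ b ≤ |(a ⊔ -b) ⊓ b| := by
  let : DistribLattice G := AddCommGroup.toDistribLattice G
  have hneg : -((a ⊔ -b) ⊓ b) = -a ⊓ b ⊔ -b := by rw [neg_inf, neg_sup, neg_neg]
  calc |a| ⊓ b = a ⊓ b ⊔ -a ⊓ b := inf_sup_right _ _ _
    _ ≤ (a ⊔ -b) ⊓ b ⊔ -((a ⊔ -b) ⊓ b) :=
      sup_le_sup (inf_le_inf_right _ le_sup_left) (hneg ▸ le_sup_left)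

theorem abs_clamp_sub_clamp_le {x y b c : G} (hbc : b ≤ c) :
    |(x ⊔ b) ⊓ c - (y ⊔ b) ⊓ c| ≤ |x - y| ⊓ (c - b) := by
  refine le_inf ?_ ?_
  · calc |(x ⊔ b) ⊓ c - (y ⊔ b) ⊓ c| ≤ |(x ⊔ b) - (y ⊔ b)| := abs_inf_sub_inf_le_abs _ _ _
      _ ≤ |x - y| := abs_sup_sub_sup_le_abs _ _ _
  · have hx : b ≤ (x ⊔ b) ⊓ c := le_inf le_sup_right hbc
    have hy : b ≤ (y ⊔ b) ⊓ c := le_inf le_sup_right hbc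
    refine abs_le'.mpr ⟨sub_le_sub inf_le_right hy, ?_⟩
    rw [neg_sub]
    exact sub_le_sub inf_le_right hx

theorem succ_nsmul_sub_inf_nsmul_inf_le {x e : G} (hx : 0 ≤ x) (he : 0 ≤ e) (n : ℕ) :
    (n + 1) • ((x - x ⊓ n • e) ⊓ e) ≤ x := by
  set w := (x - x ⊓ n • e) ⊓ e
  have hw : ∀ k ≤ n, w ≤ x - x ⊓ k • e := fun k hk =>
    inf_le_left.trans (sub_le_sub_left (inf_le_inf_left x (nsmul_le_nsmul_left he hk)) x)
  have key : ∀ k ≤ n, k • w ≤ x ⊓ k • e := by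
    intro k hk
    induction k with
    | zero => simpa using hx
    | succ k ih =>
      have hk' : k ≤ n := k.le_succ.trans hk
      rw [succ_nsmul, succ_nsmul]
      refine le_inf ?_ (add_le_add ((ih hk').trans inf_le_right) inf_le_right)
      calc k • w + w ≤ x ⊓ k • e + (x - x ⊓ k • e) := add_le_add (ih hk') (hw k hk')
        _ = x := add_sub_cancel _ _
  rw [succ_nsmul]
  calc n • w + w ≤ x ⊓ n • e + (x - x ⊓ n • e) := add_le_add (key n le_rfl) inf_le_left
    _ = x := add_sub_cancel _ _

end LatticeOrderedGroup

theorem sub_inf_nsmul_inf_le_one_div_smul {x e : X} (hx : 0 ≤ x) (he : 0 ≤ e) (n : ℕ) :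
    (x - x ⊓ n • e) ⊓ e ≤ (1 / ((n : ℝ) + 1)) • x := by
  have hn : (n : ℝ) + 1 ≠ 0 := by positivity
  calc (x - x ⊓ n • e) ⊓ e = (1 / ((n : ℝ) + 1)) • (((n : ℝ) + 1) • ((x - x ⊓ n • e) ⊓ e)) := by
        rw [one_div, inv_smul_smul₀ hn]
    _ ≤ (1 / ((n : ℝ) + 1)) • x := by
        refine smul_le_smul_of_nonneg_left ?_ (by positivity)
        rw [← Nat.cast_add_one, Nat.cast_smul_eq_nsmul]
        exact succ_nsmul_sub_inf_nsmul_inf_le hx he n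

namespace VLConvergence

variable (θ : VLConvergence X) {ι : Type} [Preorder ι] [IsDirected ι (· ≤ ·)] [Nonempty ι]

omit [PosSMulMono ℝ X] in
theorem conv_iff_conv_abs_sub {f : ι → X} {x : X} :
    θ.conv f x ↔ θ.conv (fun α => |f α - x|) 0 := by
  constructor
  · intro hf
    have h := θ.conv_add_smul f (fun _ => x) x x (-1) hf (θ.conv_const x)
    simp only [neg_one_smul, ← sub_eq_add_neg, sub_self] at h
    exact θ.conv_dominated _ _ h fun α => (abs_abs _).le
  · intro hf
    have h := θ.conv_add_smul _ (fun _ => x) 0 x 1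
      (θ.conv_dominated _ (fun α => f α - x) hf fun α => (abs_abs _).ge) (θ.conv_const x)
    simpa only [one_smul, sub_add_cancel, zero_add] using h

omit [PosSMulMono ℝ X] in
theorem conv_zero_of_nonneg_of_le {f g : ι → X} (hf : θ.conv f 0) (hg : ∀ α, 0 ≤ g α)
    (hgf : ∀ α, g α ≤ f α) : θ.conv g 0 :=
  θ.conv_dominated f g hf fun α => by
    rw [abs_of_nonneg (hg α), abs_of_nonneg ((hg α).trans (hgf α))]
    exact hgf α

omit [CovariantClass X X (· + ·) (· ≤ ·)] [PosSMulMono ℝ X] in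
theorem conv_nsmul {f : ι → X} (hf : θ.conv f 0) (n : ℕ) : θ.conv (fun α => n • f α) 0 := by
  simpa only [zero_add, smul_zero, Nat.cast_smul_eq_nsmul] using
    θ.conv_add_smul (fun _ => 0) f 0 0 n (θ.conv_const 0) hf

omit [PosSMulMono ℝ X] in
theorem uconv_zero_iff {f : ι → X} :
    θ.uconv f 0 ↔ ∀ u, 0 ≤ u → θ.conv (fun α => |f α| ⊓ u) 0 := by
  constructor
  · intro hf u hu
    have h := hf (-u) u (neg_le_self hu)
    rw [sup_eq_left.2 (neg_nonpos.2 hu), inf_eq_left.2 hu] at h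
    refine θ.conv_dominated _ _ h fun α => ?_
    rw [abs_of_nonneg (le_inf (abs_nonneg _) hu)]
    exact abs_inf_le_abs_sup_neg_inf _ _
  · intro hf b c hbc
    refine θ.conv_iff_conv_abs_sub.2 <|
      θ.conv_zero_of_nonneg_of_le (hf _ (sub_nonneg.2 hbc)) (fun _ => abs_nonneg _) fun α => ?_
    simpa only [sub_zero] using abs_clamp_sub_clamp_le (x := f α) (y := 0) hbc

omit [PosSMulMono ℝ X] in
theorem conv_abs_inf_of_isThetaUnit (hstar : θ.StarProperty) {e : X} (hunit : θ.IsThetaUnit e)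
    (he : 0 ≤ e) {f : ι → X} (hf : θ.conv (fun α => |f α| ⊓ e) 0) {u : X} (hu : 0 ≤ u) :
    θ.conv (fun α => |f α| ⊓ u) 0 := by
  have htail : θ.conv (fun n : ℕ => u - u ⊓ n • e) 0 :=
    θ.conv_zero_of_nonneg_of_le (θ.conv_iff_conv_abs_sub.1 (hunit u hu))
      (fun _ => sub_nonneg.2 inf_le_left) fun _ => by rw [abs_sub_comm]; exact le_abs_self _
  refine hstar _ _ (fun (n : ℕ) α => n • (|f α| ⊓ e)) (fun _ => le_inf (abs_nonneg _) hu)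
    (fun n α => ?_) htail (θ.conv_nsmul hf)
  calc |f α| ⊓ u ≤ u - u ⊓ n • e + |f α| ⊓ n • e := inf_le_sub_inf_add_inf _ _ _
    _ ≤ u - u ⊓ n • e + n • (|f α| ⊓ e) :=
      add_le_add_right (inf_nsmul_le_nsmul_inf (abs_nonneg _) he n) _

omit [PosSMulMono ℝ X] in
theorem uconv_zero_iff_of_isThetaUnit (hstar : θ.StarProperty) {e : X} (hunit : θ.IsThetaUnit e)
    (he : 0 ≤ e) (f : ι → X) : θ.uconv f 0 ↔ θ.conv (fun α => |f α| ⊓ e) 0 :=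
  θ.uconv_zero_iff.trans
    ⟨fun h => h e he, fun h _ hu => θ.conv_abs_inf_of_isThetaUnit hstar hunit he h hu⟩

theorem isThetaUnit_of_forall_seq {e : X} (he : 0 ≤ e)
    (h : ∀ f : ℕ → X, θ.conv (fun n => |f n| ⊓ e) 0 → θ.uconv f 0) : θ.IsThetaUnit e := by
  intro x hx
  have htail_nonneg : ∀ n : ℕ, 0 ≤ x - x ⊓ n • e := fun _ => sub_nonneg.2 inf_le_left
  have hsmall : θ.conv (fun n : ℕ => |x - x ⊓ n • e| ⊓ e) 0 := by
    refine θ.conv_zero_of_nonneg_of_le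
      (θ.conv_smul_zero _ x tendsto_one_div_add_atTop_nhds_zero_nat)
      (fun _ => le_inf (abs_nonneg _) he) fun n => ?_
    rw [abs_of_nonneg (htail_nonneg n)]
    exact sub_inf_nsmul_inf_le_one_div_smul hx he n
  have htail := θ.uconv_zero_iff.1 (h _ hsmall) x hx
  refine θ.conv_iff_conv_abs_sub.2 ?_
  convert htail using 2 with n
  rw [abs_sub_comm, abs_of_nonneg (htail_nonneg n),
    inf_eq_left.2 (sub_le_self x (le_inf hx (nsmul_nonneg he n)))]

end VLConvergence

theorem stmt9_general (θ : VLConvergence X)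
    (hstar : θ.StarProperty) (e : X) (he : 0 ≤ e) :
    List.TFAE [θ.IsThetaUnit e,
      ∀ (ι : Type) [Preorder ι] [IsDirected ι (· ≤ ·)] [Nonempty ι] (f : ι → X),
        θ.uconv f 0 ↔ θ.conv (fun α => |f α| ⊓ e) 0,
      ∀ f : ℕ → X, θ.uconv f 0 ↔ θ.conv (fun n => |f n| ⊓ e) 0] := by
  tfae_have 1 → 2 := fun hunit _ _ _ _ f => θ.uconv_zero_iff_of_isThetaUnit hstar hunit he f
  tfae_have 2 → 3 := fun h => h ℕ
  tfae_have 3 → 1 := fun h => θ.isThetaUnit_of_forall_seq he fun f => (h f).2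
  tfae_finish

theorem stmt9 (hArch : IsArchimedeanVL X) (θ : VLConvergence X)
    (hstar : θ.StarProperty) (e : X) (he : 0 ≤ e) :
    List.TFAE [θ.IsThetaUnit e,
      ∀ (ι : Type) [Preorder ι] [IsDirected ι (· ≤ ·)] [Nonempty ι] (f : ι → X),
        θ.uconv f 0 ↔ θ.conv (fun α => |f α| ⊓ e) 0,
      ∀ f : ℕ → X, θ.uconv f 0 ↔ θ.conv (fun n => |f n| ⊓ e) 0] :=
  stmt9_general θ hstar e he
end

section
/- Let X be an Archimedean vector lattice equipped with a convergence θ (satisfying axioms (1)–(4)) which also satisfies property (*), and let Y be a vector sublattice of X that is θ-dense in X (every x ∈ X is the θ-limit of some net in Y). If (y_α) is a net in Y with y_α →uθ 0 in Y (i.e. |y_α| ∧ u →θ 0 for all u ∈ Y₊), then y_α →uθ 0 in X (i.e. |y_α| ∧ u →θ 0 for all u ∈ X₊). -/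
open Filter

variable {X : Type*} [Lattice X] [AddCommGroup X]
  [CovariantClass X X (· + ·) (· ≤ ·)] [Module ℝ X] [PosSMulMono ℝ X]

/-- A bundled nonempty directed preordered index type (a "directed set"). -/
structure DirIndex where
  carrier : Type
  [pre : Preorder carrier]
  [dir : IsDirected carrier (· ≤ ·)]
  [ne : Nonempty carrier]

attribute [instance] DirIndex.pre DirIndex.dir DirIndex.ne

/-!
Approximate `u ≥ 0` by a net `g_β` in `Y`. Since `|f_α| ⊓ u ≤ |u - g_β| + |f_α| ⊓ |g_β|`, where
`|u - g_β| →θ 0` and, for fixed `β`, `|f_α| ⊓ |g_β| →θ 0` because `|g_β| ∈ Y₊`, property (*)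
gives `|f_α| ⊓ u →θ 0`.
-/

theorem inf_le_abs_sub_add_inf_abs {E : Type*} [Lattice E] [AddCommGroup E] [AddLeftMono E]
    {u : E} (hu : 0 ≤ u) (a v : E) :
    a ⊓ u ≤ |u - v| + a ⊓ |v| := by
  refine sub_le_iff_le_add.mp ?_
  calc a ⊓ u - a ⊓ |v| ≤ |(a ⊓ u - a ⊓ |v|)| := le_abs_self _
    _ ≤ |(u - |v|)| := by simpa only [inf_comm a] using abs_inf_sub_inf_le_abs u |v| a
    _ = |(|u| - |v|)| := by rw [abs_of_nonneg hu]
    _ ≤ |u - v| := abs_abs_sub_abs_le u v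

theorem Submodule.abs_mem_of_sup_mem {E : Type*} [Lattice E] [AddCommGroup E] [Module ℝ E]
    {Y : Submodule ℝ E} (hY : ∀ a b : E, a ∈ Y → b ∈ Y → a ⊔ b ∈ Y) {x : E} (hx : x ∈ Y) :
    |x| ∈ Y :=
  hY x (-x) hx (Y.neg_mem hx)

namespace VLConvergence

variable {E : Type*} [Lattice E] [AddCommGroup E] [Module ℝ E] (θ : VLConvergence E)
  {ι : Type} [Preorder ι] [IsDirected ι (· ≤ ·)] [Nonempty ι]

theorem conv_const_sub {g : ι → E} {x : E} (hg : θ.conv g x) :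
    θ.conv (fun α => x - g α) 0 := by
  simpa [sub_eq_add_neg] using θ.conv_add_smul _ g x x (-1) (θ.conv_const x) hg

variable [AddLeftMono E]

theorem conv_abs {f : ι → E} (hf : θ.conv f 0) : θ.conv (fun α => |f α|) 0 :=
  θ.conv_dominated f _ hf fun α => (abs_abs (f α)).le

variable {θ}

theorem StarProperty.inf_conv_zero_of_conv (hstar : θ.StarProperty)
    {κ : Type} [Preorder κ] [IsDirected κ (· ≤ ·)] [Nonempty κ]
    {x : ι → E} (hx : ∀ α, 0 ≤ x α) {u : E} (hu : 0 ≤ u) {g : κ → E} (hg : θ.conv g u)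
    (hxg : ∀ β, θ.conv (fun α => x α ⊓ |g β|) 0) :
    θ.conv (fun α => x α ⊓ u) 0 :=
  hstar _ (fun β => |u - g β|) (fun β α => x α ⊓ |g β|) (fun α => le_inf (hx α) hu)
    (fun β α => inf_le_abs_sub_add_inf_abs hu (x α) (g β)) (θ.conv_abs (θ.conv_const_sub hg))
    hxg

end VLConvergence

theorem stmt12_general (θ : VLConvergence X)
    (hstar : θ.StarProperty)
    (Y : Submodule ℝ X) (hYlat : ∀ a b : X, a ∈ Y → b ∈ Y → a ⊔ b ∈ Y)
    (hdense : ∀ x : X, ∃ (A : DirIndex) (g : A.carrier → X),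
      (∀ α, g α ∈ Y) ∧ θ.conv g x)
    {ι : Type} [Preorder ι] [IsDirected ι (· ≤ ·)] [Nonempty ι]
    (f : ι → X)
    (h : ∀ u : X, u ∈ Y → 0 ≤ u → θ.conv (fun α => |f α| ⊓ u) 0) :
    ∀ u : X, 0 ≤ u → θ.conv (fun α => |f α| ⊓ u) 0 := by
  intro u hu
  obtain ⟨A, g, hgY, hg⟩ := hdense u
  exact hstar.inf_conv_zero_of_conv (fun α => abs_nonneg (f α)) hu hg fun β =>
    h _ (Y.abs_mem_of_sup_mem hYlat (hgY β)) (abs_nonneg _)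

theorem stmt12 (hArch : IsArchimedeanVL X) (θ : VLConvergence X)
    (hstar : θ.StarProperty)
    (Y : Submodule ℝ X) (hYlat : ∀ a b : X, a ∈ Y → b ∈ Y → a ⊔ b ∈ Y)
    (hdense : ∀ x : X, ∃ (A : DirIndex) (g : A.carrier → X),
      (∀ α, g α ∈ Y) ∧ θ.conv g x)
    {ι : Type} [Preorder ι] [IsDirected ι (· ≤ ·)] [Nonempty ι]
    (f : ι → X) (hfY : ∀ α, f α ∈ Y)
    (h : ∀ u : X, u ∈ Y → 0 ≤ u → θ.conv (fun α => |f α| ⊓ u) 0) :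
    ∀ u : X, 0 ≤ u → θ.conv (fun α => |f α| ⊓ u) 0 :=
  stmt12_general θ hstar Y hYlat hdense f h
end

section
/- Let (X_i, θ_i)_{i∈I} be a family of Archimedean vector lattices, each equipped with a convergence θ_i satisfying axioms (1)–(4). Equip the product X = ∏_{i∈I} X_i (with componentwise order and operations) with the product convergence θ: a net x_α →θ x iff p_i(x_α) →θ_i p_i(x) for every i ∈ I, where p_i is the i-th coordinate projection. Then for any net (x_α) in X and x ∈ X: x_α →uθ x if and only if p_i(x_α) →uθ_i p_i(x) for every i ∈ I; that is, uθ coincides with the product of the convergences uθ_i. -/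
open Filter

variable {X : Type*} [Lattice X] [AddCommGroup X]
  [CovariantClass X X (· + ·) (· ≤ ·)] [Module ℝ X] [PosSMulMono ℝ X]

namespace VLConvergence

variable {I : Type*} {Y : I → Type*} [∀ i, Lattice (Y i)] [∀ i, AddCommGroup (Y i)]
  [∀ i, Module ℝ (Y i)]

def IsPiConvergence (θ : ∀ i, VLConvergence (Y i)) (Θ : VLConvergence (∀ i, Y i)) : Prop :=
  ∀ (ι : Type) [Preorder ι] [IsDirected ι (· ≤ ·)] [Nonempty ι]
    (f : ι → ∀ i, Y i) (x : ∀ i, Y i),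
    Θ.conv f x ↔ ∀ i, (θ i).conv (fun α => f α i) (x i)

variable {θ : ∀ i, VLConvergence (Y i)} {Θ : VLConvergence (∀ i, Y i)}
  {ι : Type} [Preorder ι] [IsDirected ι (· ≤ ·)] [Nonempty ι]
  {f : ι → ∀ i, Y i} {x : ∀ i, Y i}

theorem IsPiConvergence.uconv_apply (hΘ : IsPiConvergence θ Θ) (h : Θ.uconv f x) (i : I) :
    (θ i).uconv (fun α => f α i) (x i) := by
  classical
  intro b c hbc
  -- Truncating at `Pi.single i b ≤ Pi.single i c` gives, in coordinate `i`, the truncation at `b ≤ c`.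
  simpa using (hΘ ι _ _).mp (h _ _ (Pi.single_mono i hbc)) i

theorem IsPiConvergence.uconv_of_forall (hΘ : IsPiConvergence θ Θ)
    (h : ∀ i, (θ i).uconv (fun α => f α i) (x i)) : Θ.uconv f x :=
  fun b c hbc => (hΘ ι _ _).mpr fun i => h i (b i) (c i) (hbc i)

theorem IsPiConvergence.uconv_iff (hΘ : IsPiConvergence θ Θ) :
    Θ.uconv f x ↔ ∀ i, (θ i).uconv (fun α => f α i) (x i) :=
  ⟨hΘ.uconv_apply, hΘ.uconv_of_forall⟩

end VLConvergence

theorem stmt16_general {I : Type*} (Y : I → Type*)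
    [∀ i, Lattice (Y i)] [∀ i, AddCommGroup (Y i)]
    [∀ i, Module ℝ (Y i)]
    (θ : ∀ i, VLConvergence (Y i))
    (Θ : VLConvergence (∀ i, Y i))
    (hΘ : ∀ (ι : Type) [Preorder ι] [IsDirected ι (· ≤ ·)] [Nonempty ι]
      (f : ι → ∀ i, Y i) (x : ∀ i, Y i),
      Θ.conv f x ↔ ∀ i, (θ i).conv (fun α => f α i) (x i))
    {ι : Type} [Preorder ι] [IsDirected ι (· ≤ ·)] [Nonempty ι]
    (f : ι → ∀ i, Y i) (x : ∀ i, Y i) :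
    Θ.uconv f x ↔ ∀ i, (θ i).uconv (fun α => f α i) (x i) :=
  VLConvergence.IsPiConvergence.uconv_iff hΘ

theorem stmt16 {I : Type*} (Y : I → Type*)
    [∀ i, Lattice (Y i)] [∀ i, AddCommGroup (Y i)]
    [∀ i, CovariantClass (Y i) (Y i) (· + ·) (· ≤ ·)]
    [∀ i, Module ℝ (Y i)] [∀ i, PosSMulMono ℝ (Y i)]
    (hArch : ∀ i, IsArchimedeanVL (Y i))
    (θ : ∀ i, VLConvergence (Y i))
    (Θ : VLConvergence (∀ i, Y i))
    (hΘ : ∀ (ι : Type) [Preorder ι] [IsDirected ι (· ≤ ·)] [Nonempty ι]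
      (f : ι → ∀ i, Y i) (x : ∀ i, Y i),
      Θ.conv f x ↔ ∀ i, (θ i).conv (fun α => f α i) (x i))
    {ι : Type} [Preorder ι] [IsDirected ι (· ≤ ·)] [Nonempty ι]
    (f : ι → ∀ i, Y i) (x : ∀ i, Y i) :
    Θ.uconv f x ↔ ∀ i, (θ i).uconv (fun α => f α i) (x i) :=
  stmt16_general Y θ Θ hΘ f x
end
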